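/- For a prime p, positive integers n, k, r with p^r > 2 and k ≠ p^r, there is no tuple (k_1,...,k_n) of nonnegative integers with k_1+···+k_n = k, k_1+2k_2+···+n·k_n = n, and multinomial coefficient (k_1+···+k_n)!/(k_1!···k_n!) equal to p^r. -/

import Mathlib

/-!
Splitting off one index `j` writes a multinomial coefficient as `C(k, a) * M'`, where `a` is the
entry at `j` and `M'` is the multinomial of the remaining entries, whose sum is `k - a`.
For `0 < a < k` we have `k ≤ C(k, a)`, while Kummer's bound gives `p ^ v_p(C(k, a)) ≤ k`; so a
binomial coefficient dividing a power of `p` is either `1` or exactly `k`. Induct on the index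
set. If `M' = 1`, the multinomial is `C(k, a) = k`. Otherwise, by induction `k - a = M'` is a
nontrivial power of `p`, and so is `k = C(k, a)` when `a ≠ 0`; then `p ∣ a`, so `2 ≤ a ≤ k - 2`,
where `C(k, a) > k`, a contradiction.
-/

namespace Nat

theorem self_le_choose {n k : ℕ} (hk : 0 < k) (hkn : k < n) : n ≤ n.choose k := by
  induction n generalizing k with
  | zero => omega
  | succ n ih =>
    obtain ⟨k, rfl⟩ : ∃ j, k = j + 1 := ⟨k - 1, by omega⟩
    rw [choose_succ_succ']
    rcases Nat.eq_zero_or_pos k with rfl | hk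
    · simp [add_comm]
    · have := ih hk (by omega)
      have := choose_pos (n := n) (k := k + 1) (by omega)
      omega

theorem self_lt_choose {n k : ℕ} (hk : 2 ≤ k) (hkn : k + 2 ≤ n) : n < n.choose k := by
  obtain ⟨n, rfl⟩ : ∃ m, n = m + 1 := ⟨n - 1, by omega⟩
  obtain ⟨k, rfl⟩ : ∃ j, k = j + 1 := ⟨k - 1, by omega⟩
  rw [choose_succ_succ']
  have := self_le_choose (n := n) (k := k) (by omega) (by omega)
  have := self_le_choose (n := n) (k := k + 1) (by omega) (by omega)
  omega

theorem Prime.dvd_of_ne_one_of_dvd_pow {p m t : ℕ} (hp : p.Prime) (hm : m ≠ 1) (h : m ∣ p ^ t) :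
    p ∣ m := by
  obtain ⟨i, -, rfl⟩ := (Nat.dvd_prime_pow hp).mp h
  exact dvd_pow_self p fun hi => hm (by rw [hi, pow_zero])

theorem choose_eq_self_of_dvd_prime_pow {p n k t : ℕ} (hp : p.Prime) (hk : 0 < k) (hkn : k < n)
    (h : n.choose k ∣ p ^ t) : n.choose k = n := by
  obtain ⟨u, -, hu⟩ := (Nat.dvd_prime_pow hp).mp h
  have hkummer := pow_factorization_choose_le (p := p) (k := k) (by omega : 0 < n)
  rw [hu, hp.factorization_pow, Finsupp.single_eq_same, ← hu] at hkummer
  exact le_antisymm hkummer (self_le_choose hk hkn)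

theorem sum_eq_multinomial_of_dvd_prime_pow {ι : Type*} {p t : ℕ} (hp : p.Prime) (s : Finset ι)
    (f : ι → ℕ) (hdvd : multinomial s f ∣ p ^ t) (hne : multinomial s f ≠ 1) :
    ∑ i ∈ s, f i = multinomial s f := by
  classical
  induction s using Finset.induction_on with
  | empty => simp at hne
  | insert j s hj ih =>
    rw [multinomial_insert hj] at hdvd hne ⊢
    rw [Finset.sum_insert hj]
    have hchoose := dvd_of_mul_right_dvd hdvd
    have hrest := dvd_of_mul_left_dvd hdvd
    by_cases hrest_one : multinomial s f = 1
    · rw [hrest_one, mul_one] at hne ⊢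
      have ha : f j ≠ 0 := fun ha => hne (by rw [ha, choose_zero_right])
      have hm : ∑ i ∈ s, f i ≠ 0 := fun hm => hne (by rw [hm, add_zero, choose_self])
      exact (choose_eq_self_of_dvd_prime_pow hp (by omega) (by omega) hchoose).symm
    · have hm := ih hrest hrest_one
      rcases Nat.eq_zero_or_pos (f j) with ha | ha
      · rw [ha, zero_add, choose_zero_right, one_mul, hm]
      · exfalso
        have hm_pos := multinomial_pos s f
        have hk := choose_eq_self_of_dvd_prime_pow hp ha (by omega) hchoose
        have hpm : p ∣ ∑ i ∈ s, f i := hm ▸ hp.dvd_of_ne_one_of_dvd_pow hrest_one hrest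
        have hpk : p ∣ f j + ∑ i ∈ s, f i :=
          hp.dvd_of_ne_one_of_dvd_pow (by omega) (hk ▸ hchoose)
        have hpa : p ∣ f j := (Nat.dvd_add_left hpm).mp hpk
        have := le_of_dvd ha hpa
        have := hp.two_le
        have := self_lt_choose (n := f j + ∑ i ∈ s, f i) (k := f j) (by omega) (by omega)
        omega

end Nat

theorem no_tuple_when_k_ne_prime_pow_general (p n k r : ℕ) (hp : p.Prime)
    (hpr : 2 < p ^ r) (hne : k ≠ p ^ r) :
    ¬ ∃ f : Fin n → ℕ,
        (∑ i, f i) = k ∧ (∑ i : Fin n, (i.1 + 1) * f i) = n ∧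
        (∑ i, f i).factorial / ∏ i, (f i).factorial = p ^ r := by
  rintro ⟨f, rfl, -, hf⟩
  change Nat.multinomial Finset.univ f = p ^ r at hf
  exact hne ((Nat.sum_eq_multinomial_of_dvd_prime_pow hp _ f (dvd_of_eq hf) (by omega)).trans hf)

theorem no_tuple_when_k_ne_prime_pow (p n k r : ℕ) (hp : p.Prime)
    (hn : 0 < n) (hk : 0 < k) (hr : 0 < r) (hpr : 2 < p ^ r) (hne : k ≠ p ^ r) :
    ¬ ∃ f : Fin n → ℕ,
        (∑ i, f i) = k ∧ (∑ i : Fin n, (i.1 + 1) * f i) = n ∧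
        (∑ i, f i).factorial / ∏ i, (f i).factorial = p ^ r :=
  no_tuple_when_k_ne_prime_pow_general p n k r hp hpr hne
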